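/- Fix n ≥ 1, m ≥ 1 and θ ∈ ℝ^{n×m}, and define g(θ, x) = softmax(θ x) for x ∈ ℝ^m. The differential of θ' ↦ g(θ', x) at θ is H ↦ J(θx) H x, where J denotes the Jacobian of softmax, and its adjoint applied to w ∈ ℝⁿ is the matrix (J(θx) w) xᵀ ∈ ℝ^{n×m}. Then span{(J(θx) w) xᵀ : x ∈ ℝ^m, w ∈ ℝⁿ} = {Z ∈ ℝ^{n×m} : 𝟙ᵀ Z = 0}, the space of n×m matrices all of whose column sums vanish. Consequently, a C¹ function h : ℝ^{n×m} → ℝ has its gradient orthogonal to this span at every θ if and only if ∇h(θ) lies in the m-dimensional space spanned by the gradients of the column-sum functions h_j(θ) = Σ_{i=1}^n θ_{i,j}, j = 1, …, m; i.e., the softmax classification layer with cross-entropy loss admits exactly the m independent conservation laws h_j. -/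

import Mathlib

/-- `softmax(z)ᵢ = exp(zᵢ) / ∑ⱼ exp(zⱼ)`. -/
noncomputable def softmaxFun {ι : Type*} [Fintype ι] (z : ι → ℝ) : ι → ℝ :=
  fun i => Real.exp (z i) / ∑ j, Real.exp (z j)

/-- Action `w ↦ J(z) w` of the softmax Jacobian `J(z) = diag(s) − s sᵀ`, `s = softmax(z)`. -/
noncomputable def softmaxJacAct (n : ℕ) (z w : Fin n → ℝ) : Fin n → ℝ :=
  fun i => softmaxFun z i * w i - softmaxFun z i * ∑ j, softmaxFun z j * w j

/-- The softmax classification layer `g(θ, x) = softmax(θ x)`, `θ ∈ ℝ^{n×m}`. -/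
noncomputable def clsLayer (n m : ℕ) (θ : EuclideanSpace ℝ (Fin n × Fin m))
    (x : Fin m → ℝ) : EuclideanSpace ℝ (Fin n) :=
  (EuclideanSpace.equiv (Fin n) ℝ).symm (softmaxFun fun i => ∑ j, θ (i, j) * x j)

/-- The generators `(J(θx) w) xᵀ` of the trace space of the classification layer at `θ`. -/
def clsTraceSet (n m : ℕ) (θ : EuclideanSpace ℝ (Fin n × Fin m)) :
    Set (EuclideanSpace ℝ (Fin n × Fin m)) :=
  {v | ∃ (x : Fin m → ℝ) (w : Fin n → ℝ),
    v = (EuclideanSpace.equiv (Fin n × Fin m) ℝ).symm fun p =>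
      softmaxJacAct n (fun i => ∑ j, θ (i, j) * x j) w p.1 * x p.2}

/-!
The differential of `θ ↦ softmax(θx)` is `H ↦ J(θx)(Hx)`, obtained from
`softmax(z)ᵢ = exp(zᵢ - log ∑ⱼ exp zⱼ)`; since `J(z)` is symmetric, its adjoint is
`w ↦ (J(θx) w) xᵀ`. As `∑ᵢ softmax(z)ᵢ = 1`, the columns of `J(z)` sum to zero, so every
generator has zero column sums. Conversely `J(z)(u / softmax z) = u` whenever `∑ u = 0`, so with
`x = eⱼ` every matrix supported on column `j` with zero sum is a generator. Hence the span is `Kᗮ`, for `K`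
the span of the column indicators `∇hⱼ`, and the conservation-law statement is `Kᗮᗮ = K`.
-/

open scoped RealInnerProductSpace
open Submodule

section Softmax

variable {ι : Type*} [Fintype ι]

lemma sum_exp_pos [Nonempty ι] (z : ι → ℝ) : 0 < ∑ j, Real.exp (z j) :=
  Finset.sum_pos (fun _ _ => Real.exp_pos _) Finset.univ_nonempty

lemma softmaxFun_pos (z : ι → ℝ) (i : ι) : 0 < softmaxFun z i :=
  have : Nonempty ι := ⟨i⟩
  div_pos (Real.exp_pos _) (sum_exp_pos z)

lemma sum_softmaxFun [Nonempty ι] (z : ι → ℝ) : ∑ i, softmaxFun z i = 1 := by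
  simp only [softmaxFun, ← Finset.sum_div]
  exact div_self (sum_exp_pos z).ne'

lemma softmaxFun_eq_exp_sub_log [Nonempty ι] (z : ι → ℝ) (i : ι) :
    softmaxFun z i = Real.exp (z i - Real.log (∑ j, Real.exp (z j))) := by
  rw [Real.exp_sub, Real.exp_log (sum_exp_pos z), softmaxFun]

noncomputable def softmaxJac (z : ι → ℝ) : (ι → ℝ) →L[ℝ] (ι → ℝ) :=
  .pi fun i => softmaxFun z i • (.proj i - ∑ j, softmaxFun z j • .proj j)

theorem hasFDerivAt_softmaxFun [Nonempty ι] (z : ι → ℝ) :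
    HasFDerivAt softmaxFun (softmaxJac z) z := by
  refine hasFDerivAt_pi'.2 fun i => ?_
  have hS := HasFDerivAt.fun_sum (u := Finset.univ) fun j _ => (hasFDerivAt_apply j z).exp
  have h := ((hasFDerivAt_apply i z).fun_sub (hS.log (sum_exp_pos z).ne')).exp
  rw [funext fun y => softmaxFun_eq_exp_sub_log y i]
  refine h.congr_fderiv ?_
  ext w
  simp [softmaxJac, ← softmaxFun_eq_exp_sub_log, softmaxFun, Finset.mul_sum, div_eq_inv_mul,
    mul_assoc]

end Softmax

section Jacobian

variable {n : ℕ}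

lemma softmaxJac_apply (z w : Fin n → ℝ) : softmaxJac z w = softmaxJacAct n z w := by
  ext i
  simp [softmaxJac, softmaxJacAct, mul_sub, Finset.mul_sum]

lemma sum_softmaxJacAct [Nonempty (Fin n)] (z w : Fin n → ℝ) :
    ∑ i, softmaxJacAct n z w i = 0 := by
  simp only [softmaxJacAct, Finset.sum_sub_distrib, ← Finset.sum_mul, sum_softmaxFun, one_mul,
    sub_self]

lemma softmaxJacAct_dotProduct_comm (z u w : Fin n → ℝ) :
    softmaxJacAct n z u ⬝ᵥ w = u ⬝ᵥ softmaxJacAct n z w := by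
  simp only [dotProduct, softmaxJacAct, sub_mul, mul_sub, Finset.sum_sub_distrib]
  congr 1
  · exact Finset.sum_congr rfl fun i _ => by ring
  · simp only [Finset.mul_sum, Finset.sum_mul]
    rw [Finset.sum_comm]
    exact Finset.sum_congr rfl fun _ _ => Finset.sum_congr rfl fun _ _ => by ring

lemma softmaxJacAct_div_softmaxFun (z u : Fin n → ℝ) (hu : ∑ i, u i = 0) :
    softmaxJacAct n z (fun i => u i / softmaxFun z i) = u := by
  have hsu : ∀ i, softmaxFun z i * (u i / softmaxFun z i) = u i := fun i =>
    mul_div_cancel₀ _ (softmaxFun_pos z i).ne'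
  ext i
  simp only [softmaxJacAct, hsu, hu, mul_zero, sub_zero]

end Jacobian

section Layer

variable {n m : ℕ}

noncomputable def mulVecCLM (n m : ℕ) (x : Fin m → ℝ) :
    EuclideanSpace ℝ (Fin n × Fin m) →L[ℝ] (Fin n → ℝ) :=
  .pi fun i => ∑ j, x j • EuclideanSpace.proj (i, j)

lemma mulVecCLM_apply (x : Fin m → ℝ) (θ : EuclideanSpace ℝ (Fin n × Fin m)) :
    mulVecCLM n m x θ = fun i => ∑ j, θ (i, j) * x j := by
  ext i
  simp [mulVecCLM, mul_comm]

theorem hasFDerivAt_clsLayer [Nonempty (Fin n)] (θ : EuclideanSpace ℝ (Fin n × Fin m))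
    (x : Fin m → ℝ) :
    HasFDerivAt (fun θ' => clsLayer n m θ' x)
      (((EuclideanSpace.equiv (Fin n) ℝ).symm : (Fin n → ℝ) →L[ℝ] EuclideanSpace ℝ (Fin n)).comp
        ((softmaxJac (mulVecCLM n m x θ)).comp (mulVecCLM n m x))) θ := by
  have hcomp : (fun θ' => clsLayer n m θ' x) =
      (EuclideanSpace.equiv (Fin n) ℝ).symm ∘ softmaxFun ∘ mulVecCLM n m x := by
    funext θ'
    simp only [Function.comp_apply, mulVecCLM_apply, clsLayer]
  rw [hcomp]
  exact (EuclideanSpace.equiv (Fin n) ℝ).symm.hasFDerivAt.comp θ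
    ((hasFDerivAt_softmaxFun _).comp θ (mulVecCLM n m x).hasFDerivAt)

lemma fderiv_clsLayer_apply [Nonempty (Fin n)] (θ H : EuclideanSpace ℝ (Fin n × Fin m))
    (x : Fin m → ℝ) :
    fderiv ℝ (fun θ' => clsLayer n m θ' x) θ H =
      (EuclideanSpace.equiv (Fin n) ℝ).symm
        (softmaxJacAct n (fun i => ∑ j, θ (i, j) * x j) (fun i => ∑ j, H (i, j) * x j)) := by
  simp [(hasFDerivAt_clsLayer θ x).fderiv, mulVecCLM_apply, softmaxJac_apply]

lemma inner_outerProduct (u : Fin n → ℝ) (x : Fin m → ℝ) (H : EuclideanSpace ℝ (Fin n × Fin m)) :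
    ⟪(EuclideanSpace.equiv (Fin n × Fin m) ℝ).symm fun p => u p.1 * x p.2, H⟫ =
      u ⬝ᵥ fun i => ∑ j, H (i, j) * x j := by
  simp only [PiLp.continuousLinearEquiv_symm_apply, EuclideanSpace.inner_eq_star_dotProduct,
    dotProduct, Pi.star_apply, star_trivial, Fintype.sum_prod_type, Finset.mul_sum]
  exact Finset.sum_congr rfl fun _ _ => Finset.sum_congr rfl fun _ _ => by ring

lemma adjoint_fderiv_clsLayer [Nonempty (Fin n)] (θ : EuclideanSpace ℝ (Fin n × Fin m))
    (x : Fin m → ℝ) (w : Fin n → ℝ) :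
    (fderiv ℝ (fun θ' => clsLayer n m θ' x) θ).adjoint
        ((EuclideanSpace.equiv (Fin n) ℝ).symm w) =
      (EuclideanSpace.equiv (Fin n × Fin m) ℝ).symm fun p =>
        softmaxJacAct n (fun i => ∑ j, θ (i, j) * x j) w p.1 * x p.2 := by
  refine ext_inner_right ℝ fun H => ?_
  rw [ContinuousLinearMap.adjoint_inner_left, fderiv_clsLayer_apply, inner_outerProduct,
    softmaxJacAct_dotProduct_comm, EuclideanSpace.inner_eq_star_dotProduct, star_trivial]
  exact dotProduct_comm _ _

end Layer

section TraceSpace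

variable {n m : ℕ}

noncomputable def colOnes (n m : ℕ) (j : Fin m) : EuclideanSpace ℝ (Fin n × Fin m) :=
  (EuclideanSpace.equiv (Fin n × Fin m) ℝ).symm fun p => if p.2 = j then 1 else 0

lemma inner_colOnes (j : Fin m) (Z : EuclideanSpace ℝ (Fin n × Fin m)) :
    ⟪colOnes n m j, Z⟫ = ∑ i, Z (i, j) := by
  simp [colOnes, EuclideanSpace.inner_eq_star_dotProduct, dotProduct, Fintype.sum_prod_type]

lemma gradient_sum_col (j : Fin m) (θ : EuclideanSpace ℝ (Fin n × Fin m)) :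
    gradient (fun θ' : EuclideanSpace ℝ (Fin n × Fin m) => ∑ i, θ' (i, j)) θ = colOnes n m j := by
  simp_rw [← inner_colOnes]
  exact (hasGradientAt_iff_hasFDerivAt.2 (innerSL ℝ (colOnes n m j)).hasFDerivAt).gradient

lemma mem_orthogonal_span_colOnes (Z : EuclideanSpace ℝ (Fin n × Fin m)) :
    Z ∈ (span ℝ (Set.range (colOnes n m)))ᗮ ↔ ∀ j, ∑ i, Z (i, j) = 0 := by
  rw [← span_singleton_le_iff_mem, ← isOrtho_iff_le, isOrtho_comm, isOrtho_span]
  simp [inner_colOnes]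

lemma outerProduct_mem_clsTraceSet (θ : EuclideanSpace ℝ (Fin n × Fin m)) (u : Fin n → ℝ)
    (hu : ∑ i, u i = 0) (x : Fin m → ℝ) :
    ((EuclideanSpace.equiv (Fin n × Fin m) ℝ).symm fun p => u p.1 * x p.2) ∈ clsTraceSet n m θ :=
  ⟨x, fun i => u i / softmaxFun (fun i => ∑ j, θ (i, j) * x j) i, by
    rw [softmaxJacAct_div_softmaxFun _ _ hu]⟩

lemma span_clsTraceSet [Nonempty (Fin n)] (θ : EuclideanSpace ℝ (Fin n × Fin m)) :
    span ℝ (clsTraceSet n m θ) = (span ℝ (Set.range (colOnes n m)))ᗮ := by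
  refine le_antisymm (span_le.2 ?_) fun Z hZ => ?_
  · rintro _ ⟨x, w, rfl⟩
    rw [SetLike.mem_coe, mem_orthogonal_span_colOnes]
    intro j
    simp only [PiLp.continuousLinearEquiv_symm_apply, ← Finset.sum_mul, sum_softmaxJacAct, zero_mul]
  · rw [mem_orthogonal_span_colOnes] at hZ
    have hcols : Z = ∑ j, (EuclideanSpace.equiv (Fin n × Fin m) ℝ).symm fun p =>
        Z (p.1, j) * (Pi.single j 1 : Fin m → ℝ) p.2 := by
      ext p
      simp [Pi.single_apply]
    rw [hcols]
    exact sum_mem fun j _ => subset_span (outerProduct_mem_clsTraceSet θ _ (hZ j) _)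

end TraceSpace

theorem classification_layer_conservation_general
    (n m : ℕ) (hn : 1 ≤ n) (θ : EuclideanSpace ℝ (Fin n × Fin m)) :
    (∀ x : Fin m → ℝ,
      DifferentiableAt ℝ (fun θ' => clsLayer n m θ' x) θ ∧
      (∀ H : EuclideanSpace ℝ (Fin n × Fin m),
        fderiv ℝ (fun θ' => clsLayer n m θ' x) θ H =
          (EuclideanSpace.equiv (Fin n) ℝ).symm
            (softmaxJacAct n (fun i => ∑ j, θ (i, j) * x j)
              (fun i => ∑ j, H (i, j) * x j))) ∧
      (∀ w : Fin n → ℝ,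
        (fderiv ℝ (fun θ' => clsLayer n m θ' x) θ).adjoint
            ((EuclideanSpace.equiv (Fin n) ℝ).symm w) =
          (EuclideanSpace.equiv (Fin n × Fin m) ℝ).symm fun p =>
            softmaxJacAct n (fun i => ∑ j, θ (i, j) * x j) w p.1 * x p.2)) ∧
    (∀ Z : EuclideanSpace ℝ (Fin n × Fin m),
      Z ∈ Submodule.span ℝ (clsTraceSet n m θ) ↔ ∀ j : Fin m, ∑ i, Z (i, j) = 0) ∧
    (∀ h : EuclideanSpace ℝ (Fin n × Fin m) → ℝ, ContDiff ℝ 1 h →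
      ((∀ θ' : EuclideanSpace ℝ (Fin n × Fin m),
          ∀ v ∈ Submodule.span ℝ (clsTraceSet n m θ'), inner ℝ (gradient h θ') v = (0:ℝ)) ↔
       (∀ θ' : EuclideanSpace ℝ (Fin n × Fin m),
          gradient h θ' ∈ Submodule.span ℝ
            {v | ∃ j : Fin m, v = gradient (fun θ'' => ∑ i, θ'' (i, j)) θ'}))) := by
  have : Nonempty (Fin n) := ⟨⟨0, hn⟩⟩
  have hcolGrads : ∀ θ' : EuclideanSpace ℝ (Fin n × Fin m),
      {v | ∃ j : Fin m, v = gradient (fun θ'' => ∑ i, θ'' (i, j)) θ'} = Set.range (colOnes n m) :=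
    fun θ' => by simp only [gradient_sum_col, Set.range, eq_comm]
  refine ⟨fun x => ⟨(hasFDerivAt_clsLayer θ x).differentiableAt,
    fun H => fderiv_clsLayer_apply θ H x, adjoint_fderiv_clsLayer θ x⟩,
    fun Z => by rw [span_clsTraceSet, mem_orthogonal_span_colOnes], fun _ _ => ?_⟩
  refine forall_congr' fun θ' => ?_
  rw [span_clsTraceSet, hcolGrads, ← mem_orthogonal', orthogonal_orthogonal]

/-- For the softmax classification layer `g(θ, x) = softmax(θx)`:
(1) the differential of `θ' ↦ g(θ', x)` at `θ` is `H ↦ J(θx) (H x)`;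
(2) its adjoint applied to `w` is (the vectorization of) `(J(θx) w) xᵀ`;
(3) the span of these adjoint images is exactly the space of matrices whose columns all
sum to zero;
(4) consequently, a `C¹` function `h` has its gradient orthogonal to this span at every
`θ` iff `∇h(θ)` always lies in the span of the gradients of the `m` column-sum functions
`h_j(θ) = ∑ᵢ θ_{i,j}`: these are exactly the conservation laws of the layer. -/
theorem classification_layer_conservation
    (n m : ℕ) (hn : 1 ≤ n) (hm : 1 ≤ m) (θ : EuclideanSpace ℝ (Fin n × Fin m)) :
    (∀ x : Fin m → ℝ,
      DifferentiableAt ℝ (fun θ' => clsLayer n m θ' x) θ ∧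
      (∀ H : EuclideanSpace ℝ (Fin n × Fin m),
        fderiv ℝ (fun θ' => clsLayer n m θ' x) θ H =
          (EuclideanSpace.equiv (Fin n) ℝ).symm
            (softmaxJacAct n (fun i => ∑ j, θ (i, j) * x j)
              (fun i => ∑ j, H (i, j) * x j))) ∧
      (∀ w : Fin n → ℝ,
        (fderiv ℝ (fun θ' => clsLayer n m θ' x) θ).adjoint
            ((EuclideanSpace.equiv (Fin n) ℝ).symm w) =
          (EuclideanSpace.equiv (Fin n × Fin m) ℝ).symm fun p =>
            softmaxJacAct n (fun i => ∑ j, θ (i, j) * x j) w p.1 * x p.2)) ∧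
    (∀ Z : EuclideanSpace ℝ (Fin n × Fin m),
      Z ∈ Submodule.span ℝ (clsTraceSet n m θ) ↔ ∀ j : Fin m, ∑ i, Z (i, j) = 0) ∧
    (∀ h : EuclideanSpace ℝ (Fin n × Fin m) → ℝ, ContDiff ℝ 1 h →
      ((∀ θ' : EuclideanSpace ℝ (Fin n × Fin m),
          ∀ v ∈ Submodule.span ℝ (clsTraceSet n m θ'), inner ℝ (gradient h θ') v = (0:ℝ)) ↔
       (∀ θ' : EuclideanSpace ℝ (Fin n × Fin m),
          gradient h θ' ∈ Submodule.span ℝ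
            {v | ∃ j : Fin m, v = gradient (fun θ'' => ∑ i, θ'' (i, j)) θ'}))) :=
  classification_layer_conservation_general n m hn θ
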